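/- In the non-commutative power series ring $\hat R = k\langle\langle a, b, c, d \rangle\rangle / (ab - ba,\ cd - dc,\ ad - da - bc + cb)$ (completion of the free algebra on 4 generators modulo the closed two-sided ideal generated by the three listed elements), the images of $ab - ba$, $cd - dc$, and $ad - da - bc + cb$ are zero, but $\hat R$ is not commutative: the image of $ac - ca$ is nonzero. -/

import Mathlib

/- STATEMENT 12: In `R̂ = k⟨⟨a,b,c,d⟩⟩/(ab−ba, cd−dc, ad−da−bc+cb)` the images of the
three relations are zero, but `R̂` is not commutative: the image of `ac − ca` is nonzero.

Encoding.  Mathlib has no noncommutative formal power series; we work in the quotient of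
the free associative algebra `k⟨a,b,c,d⟩` by the two-sided ideal generated by the three
quadratic relations (realized via `RingQuot`).  Since the relations and the element
`ac − ca` are homogeneous (of degree `2`), an element of degree `2` vanishes in the
completed quotient `R̂` iff it vanishes in this polynomial quotient, so the statement is
equivalent to the one about `R̂`. -/

noncomputable section

variable (k : Type) [Field k]

abbrev X (i : Fin 4) : FreeAlgebra k (Fin 4) := FreeAlgebra.ι k i

/-- The three defining relations `ab−ba`, `cd−dc`, `ad−da−bc+cb`. -/
def lineRel : FreeAlgebra k (Fin 4) → FreeAlgebra k (Fin 4) → Prop := fun x y =>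
  y = 0 ∧
    (x = X k 0 * X k 1 - X k 1 * X k 0 ∨
     x = X k 2 * X k 3 - X k 3 * X k 2 ∨
     x = X k 0 * X k 3 - X k 3 * X k 0 - X k 1 * X k 2 + X k 2 * X k 1)

namespace RingQuot

variable {R S : Type*} [Semiring R] [Semiring S] {r : R → R → Prop}

theorem mkRingHom_eq_zero_of_rel {x : R} (h : r x 0) : mkRingHom r x = 0 := by
  rw [mkRingHom_rel h, map_zero]

theorem mkRingHom_ne_zero_of_map_ne_zero (f : R →+* S) (hf : ∀ ⦃x y⦄, r x y → f x = f y)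
    {x : R} (hx : f x ≠ 0) : mkRingHom r x ≠ 0 := by
  intro h
  apply hx
  rw [← lift_mkRingHom_apply f hf x, h, map_zero]

end RingQuot

/-- `a ↦ E₁₂`, `c ↦ E₂₁`, `b, d ↦ 0`: the relations hold because each of their monomials
contains `b` or `d`. -/
def lineRep : FreeAlgebra k (Fin 4) →ₐ[k] Matrix (Fin 2) (Fin 2) k :=
  FreeAlgebra.lift k ![!![0, 1; 0, 0], 0, !![0, 0; 1, 0], 0]

theorem lineRep_rel ⦃x y : FreeAlgebra k (Fin 4)⦄ (h : lineRel k x y) :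
    lineRep k x = lineRep k y := by
  rcases h with ⟨rfl, rfl | rfl | rfl⟩ <;> simp [lineRep]

theorem lineRep_commutator_ac :
    lineRep k (X k 0 * X k 2 - X k 2 * X k 0) = !![1, 0; 0, -1] := by
  simp [lineRep]

theorem statement12 :
    ((RingQuot.mkRingHom (lineRel k)) (X k 0 * X k 1 - X k 1 * X k 0) = 0 ∧
     (RingQuot.mkRingHom (lineRel k)) (X k 2 * X k 3 - X k 3 * X k 2) = 0 ∧
     (RingQuot.mkRingHom (lineRel k))
        (X k 0 * X k 3 - X k 3 * X k 0 - X k 1 * X k 2 + X k 2 * X k 1) = 0) ∧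
    (RingQuot.mkRingHom (lineRel k)) (X k 0 * X k 2 - X k 2 * X k 0) ≠ 0 ∧
    ¬ (∀ x y : RingQuot (lineRel k), x * y = y * x) := by
  have hac : RingQuot.mkRingHom (lineRel k) (X k 0 * X k 2 - X k 2 * X k 0) ≠ 0 := by
    refine RingQuot.mkRingHom_ne_zero_of_map_ne_zero (lineRep k).toRingHom (lineRep_rel k) ?_
    intro h
    have h00 := congrFun₂ ((lineRep_commutator_ac k).symm.trans h) 0 0
    simp at h00
  refine ⟨⟨RingQuot.mkRingHom_eq_zero_of_rel ⟨rfl, .inl rfl⟩,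
    RingQuot.mkRingHom_eq_zero_of_rel ⟨rfl, .inr (.inl rfl)⟩,
    RingQuot.mkRingHom_eq_zero_of_rel ⟨rfl, .inr (.inr rfl)⟩⟩, hac, fun hcomm => hac ?_⟩
  rw [map_sub, map_mul, map_mul, hcomm, sub_self]

end
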